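/- arXiv:1412.2563 — 5 statements merged into one kernel-verified Lean document; each statement's English description precedes it below -/
import Mathlib

section
/- Let F be an absolutely continuous distribution function with F(0)=0 whose density f admits a Maclaurin series expansion valid for all x > 0, and set G(x) = F(x)·f(x). Fix a natural number r ≥ 2 and suppose f^{(k)}(0) = (-1)^k f(0)^{k+1} holds for all k ≤ r−2. Then for every k with 1 ≤ k ≤ r−1, the k-th derivative of G at 0 satisfies G^{(k)}(0) = (-1)^{k-1} f(0)^{k+1} (2^k − 1). -/
open MeasureTheory intervalIntegral Filter

private lemma sum_shift_aux (u v : ℕ → ℝ) (n : ℕ) :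
    ∑ i ∈ Finset.range (n + 2), ((n + 1).choose i : ℝ) * u i * v (n + 1 - i)
      = (∑ i ∈ Finset.range (n + 1), (n.choose i : ℝ) * u (i + 1) * v (n - i))
        + ∑ i ∈ Finset.range (n + 1), (n.choose i : ℝ) * u i * v (n + 1 - i) := by
  have h0 : ∑ i ∈ Finset.range (n + 2), ((n + 1).choose i : ℝ) * u i * v (n + 1 - i)
      = (∑ i ∈ Finset.range (n + 1), ((n + 1).choose (i + 1) : ℝ) * u (i + 1) * v (n - i))
        + u 0 * v (n + 1) := by
    rw [Finset.sum_range_succ' (fun i => ((n + 1).choose i : ℝ) * u i * v (n + 1 - i)) (n + 1)]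
    simp [Nat.succ_sub_succ]
  have h1 : ∑ i ∈ Finset.range (n + 1), (n.choose i : ℝ) * u i * v (n + 1 - i)
      = (∑ i ∈ Finset.range (n + 1), (n.choose (i + 1) : ℝ) * u (i + 1) * v (n - i))
        + u 0 * v (n + 1) := by
    have h2 : ∑ i ∈ Finset.range (n + 1), (n.choose i : ℝ) * u i * v (n + 1 - i)
        = ∑ i ∈ Finset.range (n + 2), (n.choose i : ℝ) * u i * v (n + 1 - i) := by
      rw [Finset.sum_range_succ (fun i => (n.choose i : ℝ) * u i * v (n + 1 - i)) (n + 1)]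
      simp [Nat.choose_succ_self]
    rw [h2, Finset.sum_range_succ' (fun i => (n.choose i : ℝ) * u i * v (n + 1 - i)) (n + 1)]
    simp [Nat.succ_sub_succ]
  have h3 : ∑ i ∈ Finset.range (n + 1), ((n + 1).choose (i + 1) : ℝ) * u (i + 1) * v (n - i)
      = (∑ i ∈ Finset.range (n + 1), (n.choose i : ℝ) * u (i + 1) * v (n - i))
        + ∑ i ∈ Finset.range (n + 1), (n.choose (i + 1) : ℝ) * u (i + 1) * v (n - i) := by
    rw [← Finset.sum_add_distrib]
    refine Finset.sum_congr rfl fun i _ => ?_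
    rw [Nat.choose_succ_succ]
    push_cast
    ring
  rw [h0, h1, h3]
  ring

private lemma leibniz_iteratedDerivWithin {s : Set ℝ} (hs : UniqueDiffOn ℝ s)
    {f g : ℝ → ℝ} (hf : ContDiffOn ℝ (⊤ : ℕ∞) f s) (hg : ContDiffOn ℝ (⊤ : ℕ∞) g s) :
    ∀ (n : ℕ) (x : ℝ), x ∈ s →
      iteratedDerivWithin n (fun y => f y * g y) s x
        = ∑ i ∈ Finset.range (n + 1),
            (n.choose i : ℝ) * iteratedDerivWithin i f s x
              * iteratedDerivWithin (n - i) g s x := by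
  have hfd : ∀ m : ℕ, ∀ y ∈ s, HasDerivWithinAt (iteratedDerivWithin m f s)
      (iteratedDerivWithin (m + 1) f s y) s y := by
    intro m y hy
    have hd : DifferentiableOn ℝ (iteratedDerivWithin m f s) s :=
      hf.differentiableOn_iteratedDerivWithin (by exact_mod_cast (WithTop.coe_lt_top m : (m : ℕ∞) < ⊤)) hs
    have := (hd y hy).hasDerivWithinAt
    rwa [← iteratedDerivWithin_succ] at this
  have hgd : ∀ m : ℕ, ∀ y ∈ s, HasDerivWithinAt (iteratedDerivWithin m g s)
      (iteratedDerivWithin (m + 1) g s y) s y := by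
    intro m y hy
    have hd : DifferentiableOn ℝ (iteratedDerivWithin m g s) s :=
      hg.differentiableOn_iteratedDerivWithin (by exact_mod_cast (WithTop.coe_lt_top m : (m : ℕ∞) < ⊤)) hs
    have := (hd y hy).hasDerivWithinAt
    rwa [← iteratedDerivWithin_succ] at this
  intro n
  induction n with
  | zero =>
    intro x hx
    simp [iteratedDerivWithin_zero]
  | succ n ih =>
    intro x hx
    rw [iteratedDerivWithin_succ]
    have hEq : Set.EqOn (iteratedDerivWithin n (fun y => f y * g y) s)
        (fun y => ∑ i ∈ Finset.range (n + 1), (n.choose i : ℝ)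
          * iteratedDerivWithin i f s y * iteratedDerivWithin (n - i) g s y) s :=
      fun y hy => ih y hy
    rw [derivWithin_congr hEq (ih x hx)]
    have hsum : HasDerivWithinAt
        (fun y => ∑ i ∈ Finset.range (n + 1), (n.choose i : ℝ)
          * iteratedDerivWithin i f s y * iteratedDerivWithin (n - i) g s y)
        (∑ i ∈ Finset.range (n + 1), ((n.choose i : ℝ)
            * iteratedDerivWithin (i + 1) f s x * iteratedDerivWithin (n - i) g s x
          + (n.choose i : ℝ)
            * iteratedDerivWithin i f s x * iteratedDerivWithin (n - i + 1) g s x)) s x := by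
      refine HasDerivWithinAt.fun_sum fun i _ => ?_
      have h1 : HasDerivWithinAt (fun y => (n.choose i : ℝ) * iteratedDerivWithin i f s y)
          ((n.choose i : ℝ) * iteratedDerivWithin (i + 1) f s x) s x :=
        (hfd i x hx).const_mul _
      exact h1.mul (hgd (n - i) x hx)
    rw [hsum.derivWithin (hs.uniqueDiffWithinAt hx)]
    have hrw : ∑ i ∈ Finset.range (n + 1), ((n.choose i : ℝ)
            * iteratedDerivWithin (i + 1) f s x * iteratedDerivWithin (n - i) g s x
          + (n.choose i : ℝ)
            * iteratedDerivWithin i f s x * iteratedDerivWithin (n - i + 1) g s x)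
        = (∑ i ∈ Finset.range (n + 1), (n.choose i : ℝ)
            * iteratedDerivWithin (i + 1) f s x * iteratedDerivWithin (n - i) g s x)
          + ∑ i ∈ Finset.range (n + 1), (n.choose i : ℝ)
            * iteratedDerivWithin i f s x * iteratedDerivWithin (n + 1 - i) g s x := by
      rw [Finset.sum_add_distrib]
      congr 1
      refine Finset.sum_congr rfl fun i hi => ?_
      have : n - i + 1 = n + 1 - i := by
        have := Finset.mem_range.mp hi; omega
      rw [this]
    rw [hrw, ← sum_shift_aux (fun i => iteratedDerivWithin i f s x)
      (fun i => iteratedDerivWithin i g s x) n]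

/-- Lemma 2 of the paper, part on `G`.  Let `F` be an absolutely continuous distribution
function with `F 0 = 0` whose density `f` admits a Maclaurin series expansion (with
one-sided derivatives at `0`, taken within `[0,∞)`) valid for all `x > 0`, and let
`G x = F x * f x`.  Fix `r ≥ 2` and assume `f⁽ᵏ⁾(0) = (-1)^k * f(0)^(k+1)` for all
`k ≤ r - 2`.  Then for all `1 ≤ k ≤ r - 1`,
`G⁽ᵏ⁾(0) = (-1)^(k-1) * f(0)^(k+1) * (2^k - 1)`. -/
theorem derivatives_of_G_at_zero
    (F f : ℝ → ℝ) (r : ℕ) (hr : 2 ≤ r)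
    (hmono : Monotone F)
    (hF0 : F 0 = 0)
    (htop : Tendsto F atTop (nhds 1))
    (hdens : ∀ x ≥ (0 : ℝ), F x = ∫ t in (0 : ℝ)..x, f t)
    (hsmooth : ContDiffOn ℝ (⊤ : ℕ∞) f (Set.Ici 0))
    (hanal : ∀ x > (0 : ℝ),
      HasSum (fun k : ℕ =>
        iteratedDerivWithin k f (Set.Ici 0) 0 * x ^ k / (Nat.factorial k)) (f x))
    (hder : ∀ k ≤ r - 2,
      iteratedDerivWithin k f (Set.Ici 0) 0 = (-1 : ℝ) ^ k * (f 0) ^ (k + 1)) :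
    ∀ k, 1 ≤ k → k ≤ r - 1 →
      iteratedDerivWithin k (fun x => F x * f x) (Set.Ici 0) 0
        = (-1 : ℝ) ^ (k - 1) * (f 0) ^ (k + 1) * (2 ^ k - 1) := by
  have hs : UniqueDiffOn ℝ (Set.Ici (0 : ℝ)) := uniqueDiffOn_Ici 0
  have h0 : (0 : ℝ) ∈ Set.Ici (0 : ℝ) := Set.self_mem_Ici
  set Fi : ℝ → ℝ := fun x => ∫ t in (0 : ℝ)..x, f t with hFidef
  have hcf : ContinuousOn f (Set.Ici 0) := hsmooth.continuousOn
  have hInt : ∀ x ∈ Set.Ici (0 : ℝ), IntervalIntegrable f volume 0 x := by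
    intro x hx
    apply ContinuousOn.intervalIntegrable
    apply hcf.mono
    rw [Set.uIcc_of_le hx]
    exact fun t ht => ht.1
  have hFderiv : ∀ x ∈ Set.Ici (0 : ℝ), HasDerivWithinAt Fi (f x) (Set.Ici 0) x := by
    intro x hx
    rcases eq_or_lt_of_le (Set.mem_Ici.mp hx : (0 : ℝ) ≤ x) with h | h
    · rw [← h]
      exact integral_hasDerivWithinAt_right (hInt 0 h0)
        ((hcf.mono Set.Ioi_subset_Ici_self).stronglyMeasurableAtFilter_nhdsWithin
          measurableSet_Ioi 0)
        ((hcf 0 h0).mono Set.Ioi_subset_Ici_self)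
    · have hca : ContinuousAt f x := hcf.continuousAt (Ici_mem_nhds h)
      have hmeas : StronglyMeasurableAtFilter f (nhds x) volume :=
        ContinuousAt.stronglyMeasurableAtFilter isOpen_Ioi
          (fun y hy => hcf.continuousAt (Ici_mem_nhds hy)) x h
      exact (integral_hasDerivAt_right (hInt x hx) hmeas hca).hasDerivWithinAt
  have hFid : DifferentiableOn ℝ Fi (Set.Ici 0) :=
    fun x hx => (hFderiv x hx).differentiableWithinAt
  have hFi' : Set.EqOn (derivWithin Fi (Set.Ici 0)) f (Set.Ici 0) :=
    fun x hx => (hFderiv x hx).derivWithin (hs.uniqueDiffWithinAt hx)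
  have hfC : ContDiffOn ℝ (⊤ : ℕ∞) f (Set.Ici 0) := hsmooth.of_le (mod_cast le_top)
  have hFiC : ContDiffOn ℝ (⊤ : ℕ∞) Fi (Set.Ici 0) :=
    (contDiffOn_infty_iff_derivWithin hs).mpr ⟨hFid, hfC.congr hFi'⟩
  have hFF : Set.EqOn (fun x => F x * f x) (fun x => Fi x * f x) (Set.Ici 0) :=
    fun x hx => by simp only [hdens x hx, hFidef]
  have iterF : ∀ m : ℕ, iteratedDerivWithin (m + 1) Fi (Set.Ici 0) 0
      = iteratedDerivWithin m f (Set.Ici 0) 0 := by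
    intro m
    rw [iteratedDerivWithin_succ']
    exact iteratedDerivWithin_congr hFi' h0
  intro k hk1 hk2
  have hG : iteratedDerivWithin k (fun x => F x * f x) (Set.Ici 0) 0
      = iteratedDerivWithin k (fun x => Fi x * f x) (Set.Ici 0) 0 :=
    iteratedDerivWithin_congr hFF h0
  rw [hG, leibniz_iteratedDerivWithin hs hFiC hfC k 0 h0]
  rw [Finset.sum_range_succ' (fun i => (k.choose i : ℝ)
    * iteratedDerivWithin i Fi (Set.Ici 0) 0 * iteratedDerivWithin (k - i) f (Set.Ici 0) 0) k]
  have hzero : (k.choose 0 : ℝ) * iteratedDerivWithin 0 Fi (Set.Ici 0) 0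
      * iteratedDerivWithin (k - 0) f (Set.Ici 0) 0 = 0 := by
    rw [iteratedDerivWithin_zero]
    simp [hFidef]
  rw [hzero, add_zero]
  have hterm : ∀ i ∈ Finset.range k, (k.choose (i + 1) : ℝ)
      * iteratedDerivWithin (i + 1) Fi (Set.Ici 0) 0
      * iteratedDerivWithin (k - (i + 1)) f (Set.Ici 0) 0
      = (k.choose (i + 1) : ℝ) * ((-1 : ℝ) ^ (k - 1) * (f 0) ^ (k + 1)) := by
    intro i hi
    have hik := Finset.mem_range.mp hi
    rw [iterF i, hder i (by omega), hder (k - (i + 1)) (by omega)]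
    have e1 : (-1 : ℝ) ^ i * (-1 : ℝ) ^ (k - (i + 1)) = (-1 : ℝ) ^ (k - 1) := by
      rw [← pow_add]; congr 1; omega
    have e2 : (f 0) ^ (i + 1) * (f 0) ^ (k - (i + 1) + 1) = (f 0) ^ (k + 1) := by
      rw [← pow_add]; congr 1; omega
    rw [← e1, ← e2]; ring
  rw [Finset.sum_congr rfl hterm, ← Finset.sum_mul]
  have hchoose : (∑ i ∈ Finset.range k, (k.choose (i + 1) : ℝ)) = 2 ^ k - 1 := by
    have h2 : (∑ i ∈ Finset.range k, k.choose (i + 1)) + k.choose 0 = 2 ^ k := by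
      rw [← Finset.sum_range_succ' (fun i => k.choose i) k]
      exact Nat.sum_range_choose k
    have h3 := congrArg (Nat.cast : ℕ → ℝ) h2
    push_cast [Nat.choose_zero_right] at h3
    linarith
  rw [hchoose]
  ring
end

section
/- Let F be an absolutely continuous distribution function with F(0)=0 whose density f admits a Maclaurin series expansion valid for all x > 0, and set H(x) = F(x)²·f(x). Fix a natural number r ≥ 2 and suppose f^{(k)}(0) = (-1)^k f(0)^{k+1} holds for all k ≤ r−2. Then for every k with 1 ≤ k ≤ r, the k-th derivative of H at 0 satisfies H^{(k)}(0) = (-1)^{k-2} f(0)^{k+1} (3^k − 2^{k+1} + 1). In particular H(0) = H′(0) = 0 and H″(0) = 2 f(0)³ hold unconditionally. -/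
open MeasureTheory intervalIntegral Filter
open scoped ContDiff

section Aux
open Finset ContDiff

lemma sum_shift (u v : ℕ → ℝ) (n : ℕ) :
    ∑ i ∈ Finset.range (n+1), (n.choose i : ℝ) * (u (i+1) * v (n-i) + u i * v (n-i+1))
      = ∑ i ∈ Finset.range (n+2), ((n+1).choose i : ℝ) * (u i * v (n+1-i)) := by
  rw [Finset.sum_range_succ' (fun i => ((n+1).choose i : ℝ) * (u i * v (n+1-i))) (n+1)]
  simp only [Nat.choose_succ_succ, Nat.succ_sub_succ, Nat.cast_add, Nat.choose_zero_right,
    Nat.cast_one, Nat.sub_zero, one_mul]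
  simp only [mul_add, add_mul, Finset.sum_add_distrib]
  have h1 : ∑ i ∈ Finset.range (n+1), (n.choose (i+1) : ℝ) * (u (i+1) * v (n-i))
      = ∑ i ∈ Finset.range n, (n.choose (i+1) : ℝ) * (u (i+1) * v (n-i)) := by
    rw [Finset.sum_range_succ]
    simp [Nat.choose_succ_self]
  have h2 : ∑ i ∈ Finset.range (n+1), (n.choose i : ℝ) * (u i * v (n-i+1))
      = (∑ i ∈ Finset.range n, (n.choose (i+1) : ℝ) * (u (i+1) * v (n-(i+1)+1)))
        + (n.choose 0 : ℝ) * (u 0 * v (n-0+1)) := by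
    rw [Finset.sum_range_succ' (fun i => (n.choose i : ℝ) * (u i * v (n-i+1))) n]
  have h3 : ∀ i ∈ Finset.range n, (n.choose (i+1) : ℝ) * (u (i+1) * v (n-(i+1)+1))
      = (n.choose (i+1) : ℝ) * (u (i+1) * v (n-i)) := by
    intro i hi
    rw [Finset.mem_range] at hi
    have : n - (i+1) + 1 = n - i := by omega
    rw [this]
  rw [h2, Finset.sum_congr rfl h3, h1]
  have : n - 0 + 1 = n + 1 := by omega
  rw [this]
  simp only [Nat.choose_zero_right, Nat.cast_one, one_mul]
  rw [← add_assoc]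

lemma leibniz_within {f g : ℝ → ℝ} {s : Set ℝ} (hs : UniqueDiffOn ℝ s)
    (hf : ContDiffOn ℝ ∞ f s) (hg : ContDiffOn ℝ ∞ g s) (n : ℕ) :
    ∀ x ∈ s, iteratedDerivWithin n (fun y => f y * g y) s x
      = ∑ i ∈ Finset.range (n+1), (n.choose i : ℝ) *
          (iteratedDerivWithin i f s x * iteratedDerivWithin (n-i) g s x) := by
  induction n with
  | zero => intro x hx; simp [iteratedDerivWithin_zero]
  | succ n IH =>
    intro x hx
    have hlt : ∀ m : ℕ, (m : WithTop ℕ∞) < ∞ := fun m => by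
      exact_mod_cast WithTop.coe_lt_top m
    rw [iteratedDerivWithin_succ]
    have h1 : derivWithin (iteratedDerivWithin n (fun y => f y * g y) s) s x
        = derivWithin (fun y => ∑ i ∈ Finset.range (n+1), (n.choose i : ℝ) *
            (iteratedDerivWithin i f s y * iteratedDerivWithin (n-i) g s y)) s x :=
      derivWithin_congr (fun y hy => IH y hy) (IH x hx)
    rw [h1, derivWithin_fun_sum (fun i _ => by
      exact (((hf.differentiableOn_iteratedDerivWithin (hlt _) hs
        x hx).mul ((hg.differentiableOn_iteratedDerivWithin
        (hlt _) hs) x hx)).const_mul _))]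
    have key : ∀ i ∈ Finset.range (n+1),
        derivWithin (fun y => (n.choose i : ℝ) *
          (iteratedDerivWithin i f s y * iteratedDerivWithin (n-i) g s y)) s x
        = (n.choose i : ℝ) * (iteratedDerivWithin (i+1) f s x * iteratedDerivWithin (n-i) g s x
            + iteratedDerivWithin i f s x * iteratedDerivWithin (n-i+1) g s x) := by
      intro i _
      have du : DifferentiableWithinAt ℝ (iteratedDerivWithin i f s) s x :=
        (hf.differentiableOn_iteratedDerivWithin (hlt _) hs) x hx
      have dv : DifferentiableWithinAt ℝ (iteratedDerivWithin (n-i) g s) s x :=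
        (hg.differentiableOn_iteratedDerivWithin (hlt _) hs) x hx
      rw [derivWithin_const_mul _ (show DifferentiableWithinAt ℝ (fun y => iteratedDerivWithin i f s y * iteratedDerivWithin (n-i) g s y) s x from du.mul dv), derivWithin_fun_mul du dv,
        ← iteratedDerivWithin_succ, ← iteratedDerivWithin_succ]
    rw [Finset.sum_congr rfl key]
    exact sum_shift (fun i => iteratedDerivWithin i f s x)
      (fun i => iteratedDerivWithin i g s x) n

lemma aux_inner_sum (c : ℝ) (i : ℕ) (hi : 1 ≤ i) (FD : ℕ → ℝ) (h0 : FD 0 = 0)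
    (hFD : ∀ m, m + 2 ≤ i → FD (m+1) = (-1:ℝ)^m * c^(m+1)) :
    ∑ j ∈ Finset.range (i+1), (i.choose j : ℝ) * (FD j * FD (i-j))
      = (-1:ℝ)^i * c^i * (2^i - 2) := by
  have key : ∀ j ∈ Finset.range (i+1), (i.choose j : ℝ) * (FD j * FD (i-j))
      = (-1:ℝ)^i * c^i * ((i.choose j : ℝ) - (if j = 0 then 1 else 0)
          - (if j = i then 1 else 0)) := by
    intro j hj
    rw [Finset.mem_range] at hj
    rcases Nat.eq_zero_or_pos j with rfl | hj1
    · have : i ≠ 0 := by omega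
      simp [h0, Ne.symm this]
    rcases eq_or_lt_of_le (Nat.lt_succ_iff.mp hj : j ≤ i) with rfl | hji
    · have : j ≠ 0 := by omega
      simp [Nat.sub_self, h0, this]
    · -- 1 ≤ j ≤ i-1
      obtain ⟨p, rfl⟩ : ∃ p, j = p + 1 := ⟨j - 1, by omega⟩
      obtain ⟨q, hq⟩ : ∃ q, i - (p+1) = q + 1 := ⟨i - (p+1) - 1, by omega⟩
      have hip : p + 2 ≤ i := by omega
      have hiq : q + 2 ≤ i := by omega
      have hpq : p + q + 2 = i := by omega
      rw [hq, hFD p hip, hFD q hiq, if_neg (by omega), if_neg (by omega), ← hpq]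
      push_cast
      ring
  rw [Finset.sum_congr rfl key]
  rw [← Finset.mul_sum, Finset.sum_sub_distrib, Finset.sum_sub_distrib]
  have hch : ∑ j ∈ Finset.range (i+1), (i.choose j : ℝ) = 2^i := by
    rw [← Nat.cast_sum, Nat.sum_range_choose]
    push_cast; ring
  rw [hch, Finset.sum_ite_eq' (Finset.range (i+1)) 0 (fun _ => (1:ℝ)),
    Finset.sum_ite_eq' (Finset.range (i+1)) i (fun _ => (1:ℝ))]
  simp only [Finset.mem_range]
  rw [if_pos (by omega), if_pos (by omega)]
  ring

lemma aux_outer_sum (c : ℝ) (k : ℕ) (hk : 1 ≤ k) (DFF A : ℕ → ℝ)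
    (hDFF0 : DFF 0 = 0)
    (hDFF : ∀ i, 1 ≤ i → i ≤ k → DFF i = (-1:ℝ)^i * c^i * (2^i - 2))
    (hA : ∀ m, m + 2 ≤ k → A m = (-1:ℝ)^m * c^(m+1)) :
    ∑ i ∈ Finset.range (k+1), (k.choose i : ℝ) * (DFF i * A (k-i))
      = (-1:ℝ)^k * c^(k+1) * (3^k - 2^(k+1) + 1) := by
  have key : ∀ i ∈ Finset.range (k+1), (k.choose i : ℝ) * (DFF i * A (k-i))
      = (-1:ℝ)^k * c^(k+1) * ((k.choose i : ℝ) * (2^i - 2) + (if i = 0 then 1 else 0)) := by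
    intro i hi
    rw [Finset.mem_range, Nat.lt_succ_iff] at hi
    rcases Nat.eq_zero_or_pos i with rfl | hi1
    · simp only [hDFF0]
      norm_num
    rcases eq_or_lt_of_le (show 1 ≤ i from hi1) with h1 | hi2
    · -- i = 1
      subst h1
      rw [hDFF 1 le_rfl hi]
      norm_num
    · -- 2 ≤ i
      have h2i : 2 ≤ i := hi2
      obtain ⟨d, hd⟩ : ∃ d, k - i = d := ⟨k - i, rfl⟩
      have hkd : k = i + d := by omega
      rw [hd, hDFF i hi1 hi, hA d (by omega), if_neg (by omega), hkd]
      push_cast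
      ring
  rw [Finset.sum_congr rfl key, ← Finset.mul_sum, Finset.sum_add_distrib]
  have h3 : ∑ i ∈ Finset.range (k+1), (k.choose i : ℝ) * (2^i - 2)
      = 3^k - 2^(k+1) := by
    simp only [mul_sub, Finset.sum_sub_distrib]
    have hA2 : ∑ i ∈ Finset.range (k+1), (k.choose i : ℝ) * 2^i = 3^k := by
      have h := add_pow (2:ℝ) 1 k
      norm_num at h
      rw [h]
      exact Finset.sum_congr rfl fun i _ => mul_comm _ _
    have hB2 : ∑ i ∈ Finset.range (k+1), (k.choose i : ℝ) * 2 = 2^(k+1) := by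
      rw [← Finset.sum_mul, ← Nat.cast_sum, Nat.sum_range_choose]
      push_cast
      ring
    rw [hA2, hB2]
  have h4 : ∑ i ∈ Finset.range (k+1), (if i = 0 then (1:ℝ) else 0) = 1 := by
    rw [Finset.sum_ite_eq' (Finset.range (k+1)) 0 (fun _ => (1:ℝ))]
    simp
  rw [h3, h4]

end Aux

/-- Lemma 2 of the paper, part on `H`.  Let `F` be an absolutely continuous distribution
function with `F 0 = 0` whose density `f` admits a Maclaurin series expansion (with
one-sided derivatives at `0`, taken within `[0,∞)`) valid for all `x > 0`, and let
`H x = F x ^ 2 * f x`.  Fix `r ≥ 2`.  If `f⁽ᵏ⁾(0) = (-1)^k * f(0)^(k+1)` for all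
`k ≤ r - 2`, then for all `1 ≤ k ≤ r`,
`H⁽ᵏ⁾(0) = (-1)^(k-2) * f(0)^(k+1) * (3^k - 2^(k+1) + 1)`.
In particular `H 0 = 0`, `H' 0 = 0` and `H'' 0 = 2 * f 0 ^ 3` hold unconditionally
(without the hypothesis on the derivatives of `f`). -/
theorem derivatives_of_H_at_zero
    (F f : ℝ → ℝ) (r : ℕ) (hr : 2 ≤ r)
    (hmono : Monotone F)
    (hF0 : F 0 = 0)
    (htop : Tendsto F atTop (nhds 1))
    (hdens : ∀ x ≥ (0 : ℝ), F x = ∫ t in (0 : ℝ)..x, f t)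
    (hsmooth : ContDiffOn ℝ (⊤ : ℕ∞) f (Set.Ici 0))
    (hanal : ∀ x > (0 : ℝ),
      HasSum (fun k : ℕ =>
        iteratedDerivWithin k f (Set.Ici 0) 0 * x ^ k / (Nat.factorial k)) (f x)) :
    ((∀ k ≤ r - 2,
        iteratedDerivWithin k f (Set.Ici 0) 0 = (-1 : ℝ) ^ k * (f 0) ^ (k + 1)) →
      ∀ k, 1 ≤ k → k ≤ r →
        iteratedDerivWithin k (fun x => F x ^ 2 * f x) (Set.Ici 0) 0
          = (-1 : ℝ) ^ (k - 2) * (f 0) ^ (k + 1) * (3 ^ k - 2 ^ (k + 1) + 1))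
    ∧ F 0 ^ 2 * f 0 = 0
    ∧ iteratedDerivWithin 1 (fun x => F x ^ 2 * f x) (Set.Ici 0) 0 = 0
    ∧ iteratedDerivWithin 2 (fun x => F x ^ 2 * f x) (Set.Ici 0) 0 = 2 * f 0 ^ 3 := by
  set s : Set ℝ := Set.Ici 0 with hsdef
  have hs : UniqueDiffOn ℝ s := uniqueDiffOn_Ici 0
  have h0s : (0:ℝ) ∈ s := Set.self_mem_Ici
  have hcont : ContinuousOn f s := hsmooth.continuousOn
  have hfi : ContDiffOn ℝ ∞ f s := hsmooth.of_le (mod_cast le_top)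
  have hint : ∀ x : ℝ, 0 ≤ x → IntervalIntegrable f MeasureTheory.volume 0 x := fun x hx =>
    (hcont.mono (by rw [Set.uIcc_of_le hx]; exact Set.Icc_subset_Ici_self)).intervalIntegrable
  have hmeasgen : AEStronglyMeasurable f (MeasureTheory.volume.restrict s) :=
    hcont.aestronglyMeasurable measurableSet_Ici
  -- F has derivative f within s at every point of s
  have hFderiv : ∀ x ∈ s, HasDerivWithinAt F (f x) s x := by
    intro x hx
    have hG : HasDerivWithinAt (fun u => ∫ t in (0:ℝ)..u, f t) (f x) s x := by
      rcases eq_or_lt_of_le (show (0:ℝ) ≤ x from hx) with rfl | hxpos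
      · exact intervalIntegral.integral_hasDerivWithinAt_right (hint 0 le_rfl)
          ⟨s, Filter.mem_of_superset self_mem_nhdsWithin Set.Ioi_subset_Ici_self, hmeasgen⟩
          ((hcont 0 h0s).mono Set.Ioi_subset_Ici_self)
      · have hca : ContinuousAt f x := (hcont x (le_of_lt hxpos)).continuousAt
          (Ici_mem_nhds hxpos)
        exact (intervalIntegral.integral_hasDerivAt_right (hint x hx)
          ⟨s, Ici_mem_nhds hxpos, hmeasgen⟩ hca).hasDerivWithinAt
    exact hG.congr (fun y hy => hdens y hy) (hdens x hx)
  have hFd : ∀ x ∈ s, derivWithin F s x = f x := fun x hx =>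
    (hFderiv x hx).derivWithin (hs x hx)
  have hFC : ContDiffOn ℝ ∞ F s := by
    rw [contDiffOn_infty_iff_derivWithin hs]
    exact ⟨fun x hx => (hFderiv x hx).differentiableWithinAt, hfi.congr hFd⟩
  have hFF : ContDiffOn ℝ ∞ (fun x => F x * F x) s := hFC.mul hFC
  -- shift of derivatives of F
  have shift : ∀ m : ℕ, iteratedDerivWithin (m+1) F s 0 = iteratedDerivWithin m f s 0 := by
    intro m
    rw [iteratedDerivWithin_succ']
    exact iteratedDerivWithin_congr (fun y hy => hFd y hy) h0s
  have hHeq : (fun x : ℝ => F x ^ 2 * f x) = fun x => F x * F x * f x :=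
    funext fun x => by ring
  have Hk : ∀ k : ℕ, iteratedDerivWithin k (fun x => F x * F x * f x) s 0
      = ∑ i ∈ Finset.range (k+1), (k.choose i : ℝ) *
          (iteratedDerivWithin i (fun x => F x * F x) s 0 * iteratedDerivWithin (k-i) f s 0) :=
    fun k => leibniz_within hs hFF hfi k 0 h0s
  have DFFk : ∀ i : ℕ, iteratedDerivWithin i (fun x => F x * F x) s 0
      = ∑ j ∈ Finset.range (i+1), (i.choose j : ℝ) *
          (iteratedDerivWithin j F s 0 * iteratedDerivWithin (i-j) F s 0) :=
    fun i => leibniz_within hs hFC hFC i 0 h0s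
  have hFD0 : iteratedDerivWithin 0 F s 0 = 0 := by
    rw [iteratedDerivWithin_zero]; exact hF0
  have hDFF0 : iteratedDerivWithin 0 (fun x => F x * F x) s 0 = 0 := by
    rw [iteratedDerivWithin_zero]; simp [hF0]
  have hDFF1 : iteratedDerivWithin 1 (fun x => F x * F x) s 0 = 0 := by
    rw [DFFk 1]
    simp [Finset.sum_range_succ, hFD0]
  have ha0 : iteratedDerivWithin 0 f s 0 = f 0 := by rw [iteratedDerivWithin_zero]
  refine ⟨?_, by rw [hF0]; ring, ?_, ?_⟩
  · -- conditional part
    intro hder k hk1 hkr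
    rw [hHeq, Hk k]
    have main : ∑ i ∈ Finset.range (k+1), (k.choose i : ℝ) *
          (iteratedDerivWithin i (fun x => F x * F x) s 0 * iteratedDerivWithin (k-i) f s 0)
        = (-1:ℝ)^k * (f 0)^(k+1) * (3^k - 2^(k+1) + 1) := by
      refine aux_outer_sum (f 0) k hk1
        (fun i => iteratedDerivWithin i (fun x => F x * F x) s 0)
        (fun m => iteratedDerivWithin m f s 0) hDFF0 ?_ ?_
      · intro i hi1 hik
        show iteratedDerivWithin i (fun x => F x * F x) s 0 = _
        rw [DFFk i]
        refine aux_inner_sum (f 0) i hi1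
          (fun j => iteratedDerivWithin j F s 0) hFD0 ?_
        intro m hm
        show iteratedDerivWithin (m+1) F s 0 = _
        rw [shift m]
        exact hder m (by omega)
      · intro m hm
        exact hder m (by omega)
    rw [main]
    rcases eq_or_lt_of_le hk1 with h1 | hk2
    · rw [← h1]; norm_num
    · have h2 : 2 ≤ k := hk2
      have hsg : (-1:ℝ)^(k-2) = (-1:ℝ)^k := by
        conv_rhs => rw [← Nat.sub_add_cancel h2]
        rw [pow_add]
        norm_num
      rw [hsg]
  · -- first derivative
    rw [hHeq, Hk 1]
    simp [Finset.sum_range_succ, hDFF0, hDFF1]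
  · -- second derivative
    have hFD1 : iteratedDerivWithin 1 F s 0 = f 0 := by rw [shift 0, ha0]
    have hDFF2 : iteratedDerivWithin 2 (fun x => F x * F x) s 0 = 2 * f 0 ^ 2 := by
      rw [DFFk 2]
      simp [Finset.sum_range_succ, hFD0, hFD1]
      ring
    rw [hHeq, Hk 2]
    simp [Finset.sum_range_succ, hDFF0, hDFF1, hDFF2, ha0]
    ring
end

section
/- Let F be an absolutely continuous distribution function with F(0)=0 whose density f admits a Maclaurin series expansion valid for all x > 0; set G(x) = F(x)·f(x) and H(x) = F(x)²·f(x). If for all x > 0 the integral equation 2∫₀ˣ f(4y)(G(x−y) − H(x−y)) dy = f(x) ∫₀ˣ (2G(y) − 3H(y)) dy holds, then f^{(k)}(0) = (-1)^k f(0)^{k+1} for every natural number k; consequently f(x) = λ e^{-λx} for x > 0 with λ = f(0) > 0. -/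
/-!
Write `f x = ∑ aₖ xᵏ` for `x ≥ 0`. Then `F`, `G = F f`, `H = F² f` and both sides of the integral
equation are power series on `[0, ∞)` whose coefficients are polynomials in the `aₖ`, so by
uniqueness of coefficients the equation becomes a sequence of polynomial identities. The identity of order `n + 2` is
affine in `aₙ` once `a₀, …, aₙ₋₁` are fixed, with slope `a₀² (2 · 4ⁿ · n! / (n + 2)! - 1)`, which
vanishes only for `n = 0`; hence every solution with `a₀ ≠ 0` is determined by `a₀`, and the
exponential density `a₀ e^{-a₀ x}` is one. A solution with `a₀ = 0` vanishes identically: if `aₘ`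
were its first nonzero coefficient, the identity of order `3m + 2` would read `c aₘ³ = 0` with
`c ≠ 0`. Since `F` does not vanish, `a₀ ≠ 0`, and `F = 1 - e^{-a₀ x} > 0` forces `a₀ > 0`.
-/

open MeasureTheory intervalIntegral Filter Finset Nat Topology

noncomputable section

def cauchyProduct (a b : ℕ → ℝ) (n : ℕ) : ℝ := ∑ i ∈ range (n + 1), a i * b (n - i)

def primitiveCoeff (a : ℕ → ℝ) : ℕ → ℝ
  | 0 => 0
  | n + 1 => a n / (n + 1)

def convIntegralCoeff (p e : ℕ → ℝ) : ℕ → ℝ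
  | 0 => 0
  | n + 1 => ∑ i ∈ range (n + 1), p i * e (n - i) * i ! * (n - i)! / (n + 1)!

def expCoeff (μ : ℝ) (n : ℕ) : ℝ := μ ^ n / n !

theorem cauchyProduct_sub_left (a b c : ℕ → ℝ) :
    cauchyProduct (a - b) c = cauchyProduct a c - cauchyProduct b c := by
  ext n
  simp [cauchyProduct, sub_mul, sum_sub_distrib]

theorem cauchyProduct_sub_right (a b c : ℕ → ℝ) :
    cauchyProduct a (b - c) = cauchyProduct a b - cauchyProduct a c := by
  ext n
  simp [cauchyProduct, mul_sub, sum_sub_distrib]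

theorem cauchyProduct_smul_left (r : ℝ) (a b : ℕ → ℝ) :
    cauchyProduct (r • a) b = r • cauchyProduct a b := by
  ext n
  simp [cauchyProduct, mul_sum, mul_assoc]

theorem cauchyProduct_smul_right (r : ℝ) (a b : ℕ → ℝ) :
    cauchyProduct a (r • b) = r • cauchyProduct a b := by
  ext n
  simp [cauchyProduct, mul_sum, mul_left_comm]

theorem cauchyProduct_add_right (a b c : ℕ → ℝ) :
    cauchyProduct a (b + c) = cauchyProduct a b + cauchyProduct a c := by
  ext n
  simp [cauchyProduct, mul_add, sum_add_distrib]

theorem cauchyProduct_single_zero_left (b : ℕ → ℝ) : cauchyProduct (Pi.single 0 1) b = b := by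
  ext n
  rw [cauchyProduct, sum_eq_single 0] <;> simp +contextual

theorem cauchyProduct_expCoeff (μ ν : ℝ) :
    cauchyProduct (expCoeff μ) (expCoeff ν) = expCoeff (μ + ν) := by
  ext n
  rw [cauchyProduct, expCoeff, add_pow, sum_div]
  refine sum_congr rfl fun i hi => ?_
  have hin := Nat.lt_succ_iff.mp (mem_range.mp hi)
  rw [expCoeff, expCoeff, Nat.cast_choose ℝ hin]
  field_simp

theorem sub_mul_convIntegralCoeff_expCoeff (μ ν : ℝ) (n : ℕ) :
    (μ - ν) * convIntegralCoeff (expCoeff μ) (expCoeff ν) n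
      = expCoeff μ n - expCoeff ν n := by
  cases n with
  | zero => simp [convIntegralCoeff, expCoeff]
  | succ n =>
    have hsum : convIntegralCoeff (expCoeff μ) (expCoeff ν) (n + 1)
        = (∑ i ∈ range (n + 1), μ ^ i * ν ^ (n - i)) / (n + 1)! := by
      rw [convIntegralCoeff, sum_div]
      refine sum_congr rfl fun i _ => ?_
      simp only [expCoeff]
      field_simp
    have hgeom := geom_sum₂_mul μ ν (n + 1)
    rw [Nat.add_sub_cancel] at hgeom
    rw [hsum, expCoeff, expCoeff, mul_div_assoc', mul_comm, hgeom, sub_div]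

theorem hasSum_intervalIntegral_of_summable_bound {ι : Type*} [Countable ι]
    {g : ι → ℝ → ℝ} {u : ℝ → ℝ} {b : ι → ℝ} {x : ℝ} (hx : 0 ≤ x) (hg : ∀ i, Continuous (g i))
    (hb : Summable b) (hgb : ∀ i, ∀ y ∈ Set.Icc 0 x, |g i y| ≤ b i)
    (hsum : ∀ y ∈ Set.Icc 0 x, HasSum (fun i => g i y) (u y)) :
    HasSum (fun i => ∫ y in 0..x, g i y) (∫ y in 0..x, u y) := by
  have hIoc : ∀ y ∈ Set.uIoc 0 x, y ∈ Set.Icc 0 x := fun y hy => by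
    rw [Set.uIoc_of_le hx] at hy; exact Set.Ioc_subset_Icc_self hy
  refine hasSum_integral_of_dominated_convergence (fun i _ => b i)
    (fun i => (hg i).aestronglyMeasurable) (fun i => ae_of_all _ fun y hy => hgb i y (hIoc y hy))
    (ae_of_all _ fun _ _ => hb) intervalIntegrable_const
    (ae_of_all _ fun y hy => hsum y (hIoc y hy))

theorem hasSum_of_hasSum_succ {f : ℕ → ℝ} {s : ℝ} (h0 : f 0 = 0)
    (h : HasSum (fun n => f (n + 1)) s) : HasSum f s := by
  simpa [h0] using (hasSum_nat_add_iff 1).mp h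

theorem integral_pow_mul_sub_pow (x : ℝ) (i j : ℕ) :
    ∫ y in (0 : ℝ)..x, y ^ i * (x - y) ^ j = i ! * j ! / (i + j + 1)! * x ^ (i + j + 1) := by
  induction j generalizing i with
  | zero =>
    simp only [pow_zero, mul_one, integral_pow, Nat.factorial_zero, add_zero, Nat.cast_one]
    rw [Nat.factorial_succ]
    push_cast
    field_simp
    simp
  | succ j ih =>
    have hparts := integral_mul_deriv_eq_deriv_mul (a := 0) (b := x)
      (u := fun y => (x - y) ^ (j + 1)) (v := fun y => y ^ (i + 1) / (i + 1))
      (u' := fun y => -((j + 1) * (x - y) ^ j)) (v' := fun y => y ^ i)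
      (fun y _ => by
        simpa using ((hasDerivAt_id y).const_sub x).fun_pow (j + 1))
      (fun y _ => by
        convert (hasDerivAt_pow (i + 1) y).div_const ((i : ℝ) + 1) using 1
        push_cast; field_simp)
      (Continuous.intervalIntegrable (by fun_prop) _ _)
      (Continuous.intervalIntegrable (by fun_prop) _ _)
    have hrest : ∫ y in (0 : ℝ)..x, -((j + 1) * (x - y) ^ j) * (y ^ (i + 1) / (i + 1))
        = -((j + 1) / (i + 1)) * ∫ y in (0 : ℝ)..x, y ^ (i + 1) * (x - y) ^ j := by
      rw [← intervalIntegral.integral_const_mul]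
      exact integral_congr fun y _ => by field_simp
    calc ∫ y in (0 : ℝ)..x, y ^ i * (x - y) ^ (j + 1)
        = ∫ y in (0 : ℝ)..x, (x - y) ^ (j + 1) * y ^ i := integral_congr fun y _ => mul_comm _ _
      _ = (j + 1) / (i + 1) * ∫ y in (0 : ℝ)..x, y ^ (i + 1) * (x - y) ^ j := by
        rw [hparts, hrest]; simp
      _ = i ! * (j + 1)! / (i + (j + 1) + 1)! * x ^ (i + (j + 1) + 1) := by
        rw [ih, show i + 1 + j + 1 = i + (j + 1) + 1 by ring, Nat.factorial_succ i,
          Nat.factorial_succ j]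
        push_cast
        field_simp

theorem HasSum.sum_antidiagonal {f : ℕ × ℕ → ℝ} {s : ℝ} (h : HasSum f s) :
    HasSum (fun n => ∑ ij ∈ antidiagonal n, f ij) s := by
  refine (HasAntidiagonal.sigmaAntidiagonalEquivProd.hasSum_iff.mpr h).sigma fun n => ?_
  have := hasSum_fintype (fun ij : antidiagonal n => f ij)
  rwa [sum_coe_sort (antidiagonal n) f] at this

def HasPowerSeriesOnNonneg (u : ℝ → ℝ) (a : ℕ → ℝ) : Prop :=
  ∀ x, 0 ≤ x → HasSum (fun n => a n * x ^ n) (u x)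

namespace HasPowerSeriesOnNonneg

variable {u w : ℝ → ℝ} {a b : ℕ → ℝ}

theorem summable_abs (h : HasPowerSeriesOnNonneg u a) {x : ℝ} (hx : 0 ≤ x) :
    Summable fun n => |a n| * x ^ n := by
  simpa [abs_mul, abs_of_nonneg (pow_nonneg hx _)] using (h x hx).summable.abs

theorem sub (hu : HasPowerSeriesOnNonneg u a) (hw : HasPowerSeriesOnNonneg w b) :
    HasPowerSeriesOnNonneg (fun x => u x - w x) fun n => a n - b n :=
  fun x hx => ((hu x hx).sub (hw x hx)).congr_fun fun _ => sub_mul _ _ _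

theorem const_mul (hu : HasPowerSeriesOnNonneg u a) (c : ℝ) :
    HasPowerSeriesOnNonneg (fun x => c * u x) fun n => c * a n :=
  fun x hx => ((hu x hx).mul_left c).congr_fun fun _ => mul_assoc _ _ _

theorem comp_const_mul (hu : HasPowerSeriesOnNonneg u a) {c : ℝ} (hc : 0 ≤ c) :
    HasPowerSeriesOnNonneg (fun x => u (c * x)) fun n => c ^ n * a n :=
  fun x hx => (hu (c * x) (mul_nonneg hc hx)).congr_fun fun n => by ring

theorem mul (hu : HasPowerSeriesOnNonneg u a) (hw : HasPowerSeriesOnNonneg w b) :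
    HasPowerSeriesOnNonneg (fun x => u x * w x) (cauchyProduct a b) := by
  intro x hx
  have hprod : Summable fun ij : ℕ × ℕ => a ij.1 * x ^ ij.1 * (b ij.2 * x ^ ij.2) :=
    summable_mul_of_summable_norm (hu x hx).summable.norm (hw x hx).summable.norm
  have hcauchy := (summable_sum_mul_range_of_summable_mul
    (f := fun k => a k * x ^ k) (g := fun k => b k * x ^ k) hprod).hasSum
  rw [← (hu x hx).summable.tsum_mul_tsum_eq_tsum_sum_range (hw x hx).summable hprod,
    (hu x hx).tsum_eq, (hw x hx).tsum_eq] at hcauchy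
  refine hcauchy.congr_fun fun n => ?_
  rw [cauchyProduct, sum_mul]
  refine sum_congr rfl fun i hi => ?_
  rw [mul_mul_mul_comm, ← pow_add, Nat.add_sub_cancel' (Nat.lt_succ_iff.mp (mem_range.mp hi))]

theorem intervalIntegral (hu : HasPowerSeriesOnNonneg u a) :
    HasPowerSeriesOnNonneg (fun x => ∫ y in (0 : ℝ)..x, u y) (primitiveCoeff a) := by
  intro x hx
  have hint := hasSum_intervalIntegral_of_summable_bound hx (g := fun n y => a n * y ^ n)
    (by fun_prop) (hu.summable_abs hx)
    (fun n y hy => by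
      rw [abs_mul, abs_pow]
      gcongr
      exact (abs_of_nonneg hy.1).trans_le hy.2)
    (fun y hy => hu y hy.1)
  refine hasSum_of_hasSum_succ (by simp [primitiveCoeff]) (hint.congr_fun fun n => ?_)
  simp only [primitiveCoeff, intervalIntegral.integral_const_mul, integral_pow]
  ring

theorem convIntegral (hu : HasPowerSeriesOnNonneg u a) (hw : HasPowerSeriesOnNonneg w b) :
    HasPowerSeriesOnNonneg (fun x => ∫ y in (0 : ℝ)..x, u y * w (x - y))
      (convIntegralCoeff a b) := by
  intro x hx
  have hbound : Summable fun ij : ℕ × ℕ => |a ij.1| * x ^ ij.1 * (|b ij.2| * x ^ ij.2) :=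
    (hu.summable_abs hx).mul_of_nonneg (hw.summable_abs hx)
      (fun _ => by positivity) (fun _ => by positivity)
  have hle : ∀ ij : ℕ × ℕ, ∀ y ∈ Set.Icc 0 x,
      |a ij.1 * y ^ ij.1 * (b ij.2 * (x - y) ^ ij.2)|
        ≤ |a ij.1| * x ^ ij.1 * (|b ij.2| * x ^ ij.2) :=
    fun ij y hy => by
      have hxy : x - y ∈ Set.Icc 0 x := ⟨sub_nonneg.2 hy.2, sub_le_self x hy.1⟩
      simp only [abs_mul, abs_pow]
      gcongr
      exacts [(abs_of_nonneg hy.1).trans_le hy.2, (abs_of_nonneg hxy.1).trans_le hxy.2]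
  have hprod : ∀ y ∈ Set.Icc 0 x,
      HasSum (fun ij : ℕ × ℕ => a ij.1 * y ^ ij.1 * (b ij.2 * (x - y) ^ ij.2))
        (u y * w (x - y)) := fun y hy =>
    HasSum.mul (f := fun i => a i * y ^ i) (g := fun j => b j * (x - y) ^ j)
      (hu y hy.1) (hw (x - y) (sub_nonneg.2 hy.2))
      (hbound.of_norm_bounded fun ij => (Real.norm_eq_abs _).trans_le (hle ij y hy))
  have hcont : ∀ ij : ℕ × ℕ,
      Continuous fun y => a ij.1 * y ^ ij.1 * (b ij.2 * (x - y) ^ ij.2) :=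
    fun _ => by fun_prop
  have hint :=
    (hasSum_intervalIntegral_of_summable_bound hx hcont hbound hle hprod).sum_antidiagonal
  refine hasSum_of_hasSum_succ (by simp [convIntegralCoeff]) (hint.congr_fun fun n => ?_)
  rw [Nat.sum_antidiagonal_eq_sum_range_succ
      (fun i j => ∫ y in (0 : ℝ)..x, a i * y ^ i * (b j * (x - y) ^ j)),
    convIntegralCoeff, sum_mul]
  refine sum_congr rfl fun i hi => Eq.symm ?_
  have hin : i + (n - i) + 1 = n + 1 := by
    rw [Nat.add_sub_cancel' (Nat.lt_succ_iff.mp (mem_range.mp hi))]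
  have hintegral := integral_pow_mul_sub_pow x i (n - i)
  rw [hin] at hintegral
  calc ∫ y in (0 : ℝ)..x, a i * y ^ i * (b (n - i) * (x - y) ^ (n - i))
      = a i * b (n - i) * ∫ y in (0 : ℝ)..x, y ^ i * (x - y) ^ (n - i) := by
        rw [← intervalIntegral.integral_const_mul]
        exact integral_congr fun y _ => by ring
    _ = _ := by rw [hintegral]; ring

-- The sum of the series is analytic at `0` and vanishes on `(0, 1)`, hence near `0`.
theorem eq_zero (h : HasPowerSeriesOnNonneg (fun _ => 0) a) : a = 0 := by
  set p := FormalMultilinearSeries.ofScalars ℝ a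
  have hsum_zero : ∀ x, 0 ≤ x → p.sum x = 0 := fun x hx => by
    simp only [p, FormalMultilinearSeries.sum, FormalMultilinearSeries.ofScalars_apply_eq,
      smul_eq_mul, (h x hx).tsum_eq]
  have hradius : 0 < p.radius := by
    refine lt_of_lt_of_le zero_lt_one (p.le_radius_of_summable (r := 1) ?_)
    simpa [p, FormalMultilinearSeries.ofScalars_norm] using (h 1 zero_le_one).summable.abs
  have hp := (p.hasFPowerSeriesOnBall hradius).hasFPowerSeriesAt
  have hfreq : ∃ᶠ z in 𝓝[≠] (0 : ℝ), p.sum z = 0 :=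
    (eventually_nhdsWithin_of_forall (s := Set.Ioi 0) fun z hz => hsum_zero z (le_of_lt hz))
      |>.frequently.filter_mono (nhdsWithin_mono _ fun z hz => ne_of_gt hz)
  have := hp.eq_zero_of_eventually (hp.analyticAt.frequently_zero_iff_eventually_zero.mp hfreq)
  exact (FormalMultilinearSeries.ofScalars_series_eq_zero (E := ℝ)).mp this

theorem unique (hu : HasPowerSeriesOnNonneg u a) (hw : HasPowerSeriesOnNonneg w b)
    (huw : ∀ x, 0 ≤ x → u x = w x) : a = b :=
  sub_eq_zero.mp <| eq_zero fun x hx => by simpa [huw x hx] using (hu.sub hw) x hx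

end HasPowerSeriesOnNonneg

theorem hasPowerSeriesOnNonneg_of_forall_pos {u : ℝ → ℝ} {a : ℕ → ℝ} (h0 : a 0 = u 0)
    (h : ∀ x > 0, HasSum (fun n => a n * x ^ n) (u x)) : HasPowerSeriesOnNonneg u a := by
  intro x hx
  rcases hx.eq_or_lt with rfl | hx
  · simpa [h0] using hasSum_single (f := fun n => a n * 0 ^ n) 0 fun n hn => by simp [hn]
  · exact h x hx

theorem hasPowerSeriesOnNonneg_one : HasPowerSeriesOnNonneg (fun _ => 1) (Pi.single 0 1) :=
  fun x _ => by
    simpa using hasSum_single (f := fun n => (Pi.single 0 1 : ℕ → ℝ) n * x ^ n) 0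
      fun n hn => by simp [hn]

theorem hasPowerSeriesOnNonneg_exp (μ : ℝ) :
    HasPowerSeriesOnNonneg (fun x => Real.exp (μ * x)) (expCoeff μ) := fun x _ => by
  simpa [Real.exp_eq_exp_ℝ, expCoeff, mul_pow, div_mul_eq_mul_div] using
    NormedSpace.expSeries_div_hasSum_exp (μ * x)

def gCoeff (a : ℕ → ℝ) : ℕ → ℝ := cauchyProduct (primitiveCoeff a) a

def hCoeff (a : ℕ → ℝ) : ℕ → ℝ := cauchyProduct (primitiveCoeff a) (gCoeff a)

def lhsCoeff (a : ℕ → ℝ) : ℕ → ℝ :=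
  convIntegralCoeff (fun i => 4 ^ i * a i) fun n => gCoeff a n - hCoeff a n

def kCoeff (a : ℕ → ℝ) : ℕ → ℝ :=
  primitiveCoeff fun n => 2 * gCoeff a n - 3 * hCoeff a n

def rhsCoeff (a : ℕ → ℝ) : ℕ → ℝ := cauchyProduct a (kCoeff a)

def SolvesCoeffEquation (a : ℕ → ℝ) : Prop := ∀ n, 2 * lhsCoeff a n = rhsCoeff a n

def expDensityCoeff (l : ℝ) : ℕ → ℝ := l • expCoeff (-l)

section ExpDensity

variable (l : ℝ)

theorem primitiveCoeff_expDensityCoeff :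
    primitiveCoeff (expDensityCoeff l) = Pi.single 0 1 - expCoeff (-l) := by
  ext (_ | n)
  · simp [primitiveCoeff, expCoeff]
  · simp only [primitiveCoeff, expDensityCoeff, expCoeff, Pi.smul_apply, Pi.sub_apply,
      Pi.single_apply, Nat.succ_ne_zero, if_false, Nat.factorial_succ, smul_eq_mul]
    push_cast
    field_simp
    ring

theorem hasPowerSeriesOnNonneg_one_sub_exp :
    HasPowerSeriesOnNonneg (fun x => 1 - Real.exp (-l * x))
      (primitiveCoeff (expDensityCoeff l)) := by
  rw [primitiveCoeff_expDensityCoeff]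
  exact hasPowerSeriesOnNonneg_one.sub (hasPowerSeriesOnNonneg_exp _)

theorem gCoeff_expDensityCoeff :
    gCoeff (expDensityCoeff l) = l • (expCoeff (-l) - expCoeff (-2 * l)) := by
  rw [gCoeff, primitiveCoeff_expDensityCoeff, expDensityCoeff, cauchyProduct_smul_right,
    cauchyProduct_sub_left, cauchyProduct_single_zero_left, cauchyProduct_expCoeff,
    show -l + -l = -2 * l by ring]

theorem hCoeff_expDensityCoeff :
    hCoeff (expDensityCoeff l)
      = l • (expCoeff (-l) - (2 : ℝ) • expCoeff (-2 * l) + expCoeff (-3 * l)) := by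
  rw [hCoeff, gCoeff_expDensityCoeff, primitiveCoeff_expDensityCoeff, cauchyProduct_smul_right,
    cauchyProduct_sub_left, cauchyProduct_single_zero_left, cauchyProduct_sub_right,
    cauchyProduct_expCoeff, cauchyProduct_expCoeff,
    show -l + -l = -2 * l by ring, show -l + -2 * l = -3 * l by ring]
  module

theorem kCoeff_expDensityCoeff :
    kCoeff (expDensityCoeff l)
      = expCoeff (-l) - (2 : ℝ) • expCoeff (-2 * l) + expCoeff (-3 * l) := by
  ext (_ | n)
  · norm_num [kCoeff, primitiveCoeff, expCoeff]
  · simp only [kCoeff, primitiveCoeff, gCoeff_expDensityCoeff, hCoeff_expDensityCoeff, expCoeff,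
      Pi.smul_apply, Pi.sub_apply, Pi.add_apply, smul_eq_mul, Nat.factorial_succ]
    have : (n ! : ℝ) ≠ 0 := by positivity
    push_cast
    field_simp
    ring

theorem rhsCoeff_expDensityCoeff :
    rhsCoeff (expDensityCoeff l)
      = l • (expCoeff (-2 * l) - (2 : ℝ) • expCoeff (-3 * l) + expCoeff (-4 * l)) := by
  rw [rhsCoeff, kCoeff_expDensityCoeff, expDensityCoeff, cauchyProduct_smul_left,
    cauchyProduct_add_right, cauchyProduct_sub_right, cauchyProduct_smul_right,
    cauchyProduct_expCoeff, cauchyProduct_expCoeff, cauchyProduct_expCoeff,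
    show -l + -l = -2 * l by ring, show -l + -2 * l = -3 * l by ring,
    show -l + -3 * l = -4 * l by ring]

theorem lhsCoeff_expDensityCoeff (n : ℕ) :
    lhsCoeff (expDensityCoeff l) n
      = l ^ 2 * (convIntegralCoeff (expCoeff (-4 * l)) (expCoeff (-2 * l)) n
        - convIntegralCoeff (expCoeff (-4 * l)) (expCoeff (-3 * l)) n) := by
  cases n with
  | zero => simp [lhsCoeff, convIntegralCoeff]
  | succ n =>
    simp only [lhsCoeff, convIntegralCoeff, gCoeff_expDensityCoeff, hCoeff_expDensityCoeff,
      ← sum_sub_distrib, mul_sum]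
    refine sum_congr rfl fun i _ => ?_
    have h4 : (4 : ℝ) ^ i * (-l) ^ i = (-4 * l) ^ i := by rw [← mul_pow]; ring
    simp only [expDensityCoeff, expCoeff, Pi.smul_apply, Pi.sub_apply, Pi.add_apply, smul_eq_mul,
      ← h4]
    ring

theorem solvesCoeffEquation_expDensityCoeff : SolvesCoeffEquation (expDensityCoeff l) := by
  intro n
  have h₁ := sub_mul_convIntegralCoeff_expCoeff (-4 * l) (-2 * l) n
  have h₂ := sub_mul_convIntegralCoeff_expCoeff (-4 * l) (-3 * l) n
  rw [lhsCoeff_expDensityCoeff, rhsCoeff_expDensityCoeff]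
  simp only [Pi.smul_apply, Pi.sub_apply, Pi.add_apply, smul_eq_mul]
  linear_combination (-l) * h₁ + (2 * l) * h₂

end ExpDensity

section SmallCoefficients

variable (a : ℕ → ℝ)

@[simp] theorem primitiveCoeff_zero : primitiveCoeff a 0 = 0 := rfl

@[simp] theorem gCoeff_zero : gCoeff a 0 = 0 := by simp [gCoeff, cauchyProduct]

@[simp] theorem hCoeff_zero : hCoeff a 0 = 0 := by simp [hCoeff, cauchyProduct]

@[simp] theorem kCoeff_zero : kCoeff a 0 = 0 := rfl

theorem gCoeff_one : gCoeff a 1 = a 0 ^ 2 := by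
  simp [gCoeff, cauchyProduct, sum_range_succ, primitiveCoeff, sq]

theorem hCoeff_one : hCoeff a 1 = 0 := by
  simp [hCoeff, cauchyProduct, sum_range_succ]

@[simp] theorem kCoeff_one : kCoeff a 1 = 0 := by simp [kCoeff, primitiveCoeff]

theorem kCoeff_two : kCoeff a 2 = a 0 ^ 2 := by
  simp only [kCoeff, primitiveCoeff, gCoeff_one, hCoeff_one]
  norm_num

end SmallCoefficients

section Perturbation

variable {u w : ℕ → ℝ} {n : ℕ}

theorem primitiveCoeff_congr (huw : ∀ k < n, u k = w k) {m : ℕ} (hm : m ≤ n) :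
    primitiveCoeff u m = primitiveCoeff w m := by
  cases m with
  | zero => rfl
  | succ m => rw [primitiveCoeff, primitiveCoeff, huw m hm]

theorem gCoeff_congr (huw : ∀ k < n, u k = w k) {m : ℕ} (hm : m ≤ n) :
    gCoeff u m = gCoeff w m := by
  unfold gCoeff cauchyProduct
  refine sum_congr rfl fun i hi => ?_
  have him := Nat.lt_succ_iff.mp (mem_range.mp hi)
  rcases Nat.eq_zero_or_pos i with rfl | hi0
  · simp
  · rw [primitiveCoeff_congr huw (by omega), huw (m - i) (by omega)]

theorem hCoeff_congr (huw : ∀ k < n, u k = w k) {m : ℕ} (hm : m ≤ n + 1) :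
    hCoeff u m = hCoeff w m := by
  unfold hCoeff cauchyProduct
  refine sum_congr rfl fun i hi => ?_
  have him := Nat.lt_succ_iff.mp (mem_range.mp hi)
  rcases Nat.eq_zero_or_pos i with rfl | hi0
  · simp
  rcases him.eq_or_lt with rfl | him
  · simp
  · rw [primitiveCoeff_congr huw (by omega), gCoeff_congr huw (by omega)]

theorem kCoeff_congr (huw : ∀ k < n, u k = w k) {m : ℕ} (hm : m ≤ n + 1) :
    kCoeff u m = kCoeff w m := by
  cases m with
  | zero => rfl
  | succ m => simp only [kCoeff, primitiveCoeff, gCoeff_congr huw (by omega : m ≤ n),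
      hCoeff_congr huw (by omega : m ≤ n + 1)]

theorem lhsCoeff_sub (huw : ∀ k < n, u k = w k) (hn : 0 < n) :
    lhsCoeff u (n + 2) - lhsCoeff w (n + 2) = (4 ^ n * w 0 ^ 2 * n ! * (u n - w n)
      + w 0 * (n + 1)! * (gCoeff u (n + 1) - gCoeff w (n + 1))) / (n + 2)! := by
  have h0 := huw 0 hn
  rw [lhsCoeff, lhsCoeff, convIntegralCoeff, convIntegralCoeff, ← sum_sub_distrib,
    sum_eq_add_of_mem n 0 (by simp) (by simp) hn.ne']
  · simp only [show n + 1 - n = 1 by omega, Nat.sub_zero, gCoeff_one, hCoeff_one, h0,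
      hCoeff_congr huw le_rfl]
    simp only [sub_zero, factorial_one, cast_one, mul_one, pow_zero, one_mul, factorial_zero]
    ring
  · intro i hi ⟨hin, hi0⟩
    have him := Nat.lt_succ_iff.mp (mem_range.mp hi)
    rcases him.eq_or_lt with rfl | him
    · simp
    · rw [huw i (by omega), gCoeff_congr huw (by omega), hCoeff_congr huw (by omega), sub_self]

theorem rhsCoeff_sub (huw : ∀ k < n, u k = w k) (hn : 0 < n) :
    rhsCoeff u (n + 2) - rhsCoeff w (n + 2)
      = w 0 ^ 2 * (u n - w n) + w 0 * (2 * (gCoeff u (n + 1) - gCoeff w (n + 1)) / (n + 2)) := by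
  have h0 := huw 0 hn
  rw [rhsCoeff, rhsCoeff, cauchyProduct, cauchyProduct, ← sum_sub_distrib,
    sum_eq_add_of_mem n 0 (by simp) (by simp) hn.ne']
  · rw [show n + 2 - n = 2 by omega, Nat.sub_zero, kCoeff_congr huw (by omega : 2 ≤ n + 1),
      kCoeff_two, h0]
    simp only [kCoeff, primitiveCoeff, hCoeff_congr huw le_rfl]
    push_cast
    ring
  · intro i hi ⟨hin, hi0⟩
    have him := Nat.lt_succ_iff.mp (mem_range.mp hi)
    rcases (show i = n + 1 ∨ i = n + 2 ∨ i < n by omega) with rfl | rfl | hi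
    · simp [show n + 2 - (n + 1) = 1 by omega]
    · simp
    · rw [huw i hi, kCoeff_congr huw (by omega), sub_self]

end Perturbation

theorem factorial_add_two_lt_two_mul_four_pow_mul_factorial {n : ℕ} (hn : 0 < n) :
    (n + 2)! < 2 * 4 ^ n * n ! := by
  have key : (n + 1) * (n + 2) < 2 * 4 ^ n := by
    induction n, hn using Nat.le_induction with
    | base => norm_num
    | succ n _ ih => rw [pow_succ]; nlinarith
  calc (n + 2)! = (n + 1) * (n + 2) * n ! := by simp only [factorial_succ]; ring
    _ < 2 * 4 ^ n * n ! := Nat.mul_lt_mul_of_pos_right key n.factorial_pos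

theorem eq_of_solvesCoeffEquation {u w : ℕ → ℝ} (hu : SolvesCoeffEquation u)
    (hw : SolvesCoeffEquation w) (h0 : u 0 = w 0) (hw0 : w 0 ≠ 0) : u = w := by
  funext n
  induction n using Nat.strong_induction_on with
  | _ n ih =>
  rcases Nat.eq_zero_or_pos n with rfl | hn
  · exact h0
  have hlhs := lhsCoeff_sub ih hn
  have hrhs := rhsCoeff_sub ih hn
  have hfact : ((n + 2)! : ℝ) = (n + 2) * (n + 1)! := by push_cast [Nat.factorial_succ]; ring
  have key : w 0 ^ 2 * (u n - w n) * ((n + 2)! - 2 * 4 ^ n * n !) = 0 := by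
    rw [hfact] at hlhs ⊢
    field_simp at hlhs hrhs
    linear_combination 2 * hlhs - (n + 1)! * hrhs
      - (n + 2) * (n + 1)! * (hu (n + 2) - hw (n + 2))
  have hne : ((n + 2)! : ℝ) - 2 * 4 ^ n * n ! ≠ 0 := by
    have := factorial_add_two_lt_two_mul_four_pow_mul_factorial hn
    exact sub_ne_zero.mpr (ne_of_lt (by exact_mod_cast this))
  simpa [sub_eq_zero, hw0, hne] using key

theorem eq_expDensityCoeff_of_solvesCoeffEquation {u : ℕ → ℝ} (hu : SolvesCoeffEquation u)
    (h0 : u 0 ≠ 0) : u = expDensityCoeff (u 0) :=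
  eq_of_solvesCoeffEquation hu (solvesCoeffEquation_expDensityCoeff _)
    (by simp [expDensityCoeff, expCoeff]) (by simpa [expDensityCoeff, expCoeff] using h0)

section Vanishing

variable {u : ℕ → ℝ} {m : ℕ}

theorem primitiveCoeff_eq_zero (hz : ∀ k < m, u k = 0) {j : ℕ} (hj : j ≤ m) :
    primitiveCoeff u j = 0 := by
  cases j with
  | zero => rfl
  | succ j => simp [primitiveCoeff, hz j hj]

theorem gCoeff_eq_zero (hz : ∀ k < m, u k = 0) {j : ℕ} (hj : j ≤ 2 * m) : gCoeff u j = 0 := by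
  unfold gCoeff cauchyProduct
  refine sum_eq_zero fun i hi => ?_
  have hij := Nat.lt_succ_iff.mp (mem_range.mp hi)
  by_cases him : i ≤ m
  · rw [primitiveCoeff_eq_zero hz him, zero_mul]
  · rw [hz (j - i) (by omega), mul_zero]

theorem gCoeff_two_mul_add_one (hz : ∀ k < m, u k = 0) :
    gCoeff u (2 * m + 1) = u m ^ 2 / (m + 1) := by
  rw [gCoeff, cauchyProduct, sum_eq_single (m + 1)]
  · rw [show 2 * m + 1 - (m + 1) = m by omega, primitiveCoeff]
    ring
  · intro i hi him
    have hij := Nat.lt_succ_iff.mp (mem_range.mp hi)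
    by_cases him' : i ≤ m
    · rw [primitiveCoeff_eq_zero hz him', zero_mul]
    · rw [hz (2 * m + 1 - i) (by omega), mul_zero]
  · exact fun h => absurd (mem_range.mpr (by omega)) h

theorem hCoeff_eq_zero (hz : ∀ k < m, u k = 0) {j : ℕ} (hj : j ≤ 3 * m + 1) :
    hCoeff u j = 0 := by
  unfold hCoeff cauchyProduct
  refine sum_eq_zero fun i hi => ?_
  have hij := Nat.lt_succ_iff.mp (mem_range.mp hi)
  by_cases him : i ≤ m
  · rw [primitiveCoeff_eq_zero hz him, zero_mul]
  · rw [gCoeff_eq_zero hz (by omega), mul_zero]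

theorem kCoeff_eq_zero (hz : ∀ k < m, u k = 0) {j : ℕ} (hj : j ≤ 2 * m + 1) :
    kCoeff u j = 0 := by
  cases j with
  | zero => rfl
  | succ j => simp [kCoeff, primitiveCoeff, gCoeff_eq_zero hz (by omega : j ≤ 2 * m),
      hCoeff_eq_zero hz (by omega : j ≤ 3 * m + 1)]

theorem kCoeff_two_mul_add_two (hz : ∀ k < m, u k = 0) :
    kCoeff u (2 * m + 2) = u m ^ 2 / (m + 1) ^ 2 := by
  rw [kCoeff, primitiveCoeff, gCoeff_two_mul_add_one hz, hCoeff_eq_zero hz (by omega)]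
  push_cast
  field_simp
  ring

theorem lhsCoeff_three_mul_add_two (hz : ∀ k < m, u k = 0) :
    lhsCoeff u (3 * m + 2) = 4 ^ m * u m ^ 3 * m ! * (2 * m + 1)! / ((m + 1) * (3 * m + 2)!) := by
  rw [lhsCoeff, convIntegralCoeff, sum_eq_single m]
  · rw [show 3 * m + 1 - m = 2 * m + 1 by omega, gCoeff_two_mul_add_one hz,
      hCoeff_eq_zero hz (by omega)]
    field_simp
    ring
  · intro i hi him
    have hij := Nat.lt_succ_iff.mp (mem_range.mp hi)
    rcases Nat.lt_or_gt_of_ne him with him | him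
    · simp [hz i him]
    · simp [gCoeff_eq_zero hz (by omega : 3 * m + 1 - i ≤ 2 * m),
        hCoeff_eq_zero hz (by omega : 3 * m + 1 - i ≤ 3 * m + 1)]
  · exact fun h => absurd (mem_range.mpr (by omega)) h

theorem rhsCoeff_three_mul_add_two (hz : ∀ k < m, u k = 0) :
    rhsCoeff u (3 * m + 2) = u m ^ 3 / (m + 1) ^ 2 := by
  rw [rhsCoeff, cauchyProduct, sum_eq_single m]
  · rw [show 3 * m + 2 - m = 2 * m + 2 by omega, kCoeff_two_mul_add_two hz]
    ring
  · intro i hi him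
    have hij := Nat.lt_succ_iff.mp (mem_range.mp hi)
    rcases Nat.lt_or_gt_of_ne him with him | him
    · simp [hz i him]
    · simp [kCoeff_eq_zero hz (by omega : 3 * m + 2 - i ≤ 2 * m + 1)]
  · exact fun h => absurd (mem_range.mpr (by omega)) h

end Vanishing

theorem two_mul_four_pow_mul_factorial_lt {m : ℕ} (hm : 0 < m) :
    2 * 4 ^ m * ((m + 1)! * (2 * m + 1)!) < (3 * m + 2)! := by
  induction m, hm using Nat.le_induction with
  | base => decide
  | succ m _ ih =>
    have hg : (m + 1 + 1)! = (m + 2) * (m + 1)! := Nat.factorial_succ _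
    have hg2 : (2 * (m + 1) + 1)! = (2 * m + 3) * (2 * m + 2) * (2 * m + 1)! := by
      rw [show 2 * (m + 1) + 1 = 2 * m + 1 + 1 + 1 by ring, Nat.factorial_succ, Nat.factorial_succ]
      ring
    have hg3 : (3 * (m + 1) + 2)! = (3 * m + 5) * (3 * m + 4) * (3 * m + 3) * (3 * m + 2)! := by
      rw [show 3 * (m + 1) + 2 = 3 * m + 2 + 1 + 1 + 1 by ring, Nat.factorial_succ,
        Nat.factorial_succ, Nat.factorial_succ]
      ring
    have hcoeff :
        4 * (m + 2) * (2 * m + 3) * (2 * m + 2) ≤ (3 * m + 5) * (3 * m + 4) * (3 * m + 3) := by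
      ring_nf
      nlinarith [Nat.zero_le (m ^ 3), Nat.zero_le (m ^ 2)]
    rw [hg, hg2, hg3]
    calc 2 * 4 ^ (m + 1) * ((m + 2) * (m + 1)! * ((2 * m + 3) * (2 * m + 2) * (2 * m + 1)!))
        = 2 * 4 ^ m * ((m + 1)! * (2 * m + 1)!) * (4 * (m + 2) * (2 * m + 3) * (2 * m + 2)) := by
          ring
      _ < (3 * m + 2)! * (4 * (m + 2) * (2 * m + 3) * (2 * m + 2)) :=
        Nat.mul_lt_mul_of_pos_right ih (by positivity)
      _ ≤ (3 * m + 2)! * ((3 * m + 5) * (3 * m + 4) * (3 * m + 3)) := Nat.mul_le_mul_left _ hcoeff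
      _ = _ := by ring

theorem eq_zero_of_solvesCoeffEquation {u : ℕ → ℝ} (hu : SolvesCoeffEquation u)
    (h0 : u 0 = 0) : u = 0 := by
  funext m
  induction m using Nat.strong_induction_on with
  | _ m ih =>
  rcases Nat.eq_zero_or_pos m with rfl | hm
  · exact h0
  have key := hu (3 * m + 2)
  rw [lhsCoeff_three_mul_add_two ih, rhsCoeff_three_mul_add_two ih] at key
  have hfact : ((m + 1)! : ℝ) = (m + 1) * m ! := by push_cast [Nat.factorial_succ]; ring
  have hcube : u m ^ 3 * ((3 * m + 2)! - 2 * 4 ^ m * ((m + 1)! * (2 * m + 1)!)) = 0 := by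
    rw [hfact]
    field_simp at key
    linear_combination -key
  have hne : ((3 * m + 2)! : ℝ) - 2 * 4 ^ m * ((m + 1)! * (2 * m + 1)!) ≠ 0 := by
    have := two_mul_four_pow_mul_factorial_lt hm
    exact sub_ne_zero.mpr (ne_of_gt (by exact_mod_cast this))
  simpa [hne] using hcube

theorem solvesCoeffEquation_of_integral_equation {F f : ℝ → ℝ} {a : ℕ → ℝ}
    (hf : HasPowerSeriesOnNonneg f a) (hF : HasPowerSeriesOnNonneg F (primitiveCoeff a))
    (heq : ∀ x > (0 : ℝ),
      2 * ∫ y in (0 : ℝ)..x, f (4 * y) * ((F (x - y) * f (x - y)) - (F (x - y) ^ 2 * f (x - y)))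
        = f x * ∫ y in (0 : ℝ)..x, (2 * (F y * f y) - 3 * (F y ^ 2 * f y))) :
    SolvesCoeffEquation a := by
  have hG : HasPowerSeriesOnNonneg (fun x => F x * f x) (gCoeff a) := hF.mul hf
  have hH : HasPowerSeriesOnNonneg (fun x => F x ^ 2 * f x) (hCoeff a) := fun x hx => by
    simpa only [sq, mul_assoc, hCoeff] using hF.mul hG x hx
  have hlhs := ((hf.comp_const_mul zero_le_four).convIntegral (hG.sub hH)).const_mul 2
  have hrhs := hf.mul ((hG.const_mul 2).sub (hH.const_mul 3)).intervalIntegral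
  have hcoeff := hlhs.unique hrhs fun x hx => by
    rcases hx.eq_or_lt with rfl | hx
    · simp
    · exact heq x hx
  exact congrFun hcoeff

theorem exponential_of_integral_equation_median_fourth_general
    (F f : ℝ → ℝ)
    (htop : Tendsto F atTop (nhds 1))
    (hdens : ∀ x ≥ (0 : ℝ), F x = ∫ t in (0 : ℝ)..x, f t)
    (hanal : ∀ x > (0 : ℝ),
      HasSum (fun k : ℕ =>
        iteratedDerivWithin k f (Set.Ici 0) 0 * x ^ k / (Nat.factorial k)) (f x))
    (heq : ∀ x > (0 : ℝ),
      2 * ∫ y in (0 : ℝ)..x, f (4 * y) * ((F (x - y) * f (x - y)) - (F (x - y) ^ 2 * f (x - y)))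
        = f x * ∫ y in (0 : ℝ)..x, (2 * (F y * f y) - 3 * (F y ^ 2 * f y))) :
    (∀ k : ℕ, iteratedDerivWithin k f (Set.Ici 0) 0 = (-1 : ℝ) ^ k * (f 0) ^ (k + 1))
    ∧ 0 < f 0 ∧ ∀ x > (0 : ℝ), f x = f 0 * Real.exp (-(f 0) * x) := by
  set a : ℕ → ℝ := fun k => iteratedDerivWithin k f (Set.Ici 0) 0 / (k ! : ℝ)
  have ha0 : a 0 = f 0 := by simp [a]
  have hf : HasPowerSeriesOnNonneg f a := hasPowerSeriesOnNonneg_of_forall_pos ha0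
    fun x hx => (hanal x hx).congr_fun fun k => by ring
  have hF : HasPowerSeriesOnNonneg F (primitiveCoeff a) := fun x hx =>
    hdens x hx ▸ hf.intervalIntegral x hx
  have hsol := solvesCoeffEquation_of_integral_equation hf hF heq
  obtain ⟨x₀, hx₀, hFx₀⟩ : ∃ x > 0, 0 < F x :=
    ((eventually_gt_atTop 0).and (htop.eventually (lt_mem_nhds one_pos))).exists
  have ha0_ne : a 0 ≠ 0 := fun h => by
    have hFx₀_zero : F x₀ = 0 := (hF x₀ hx₀.le).unique <| hasSum_zero.congr_fun fun n => by
      cases n <;> simp [primitiveCoeff, eq_zero_of_solvesCoeffEquation hsol h]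
    linarith
  have ha : a = expDensityCoeff (f 0) :=
    ha0 ▸ eq_expDensityCoeff_of_solvesCoeffEquation hsol ha0_ne
  have hFx₀_eq : F x₀ = 1 - Real.exp (-f 0 * x₀) :=
    (hF x₀ hx₀.le).unique (ha ▸ hasPowerSeriesOnNonneg_one_sub_exp (f 0) x₀ hx₀.le)
  refine ⟨fun k => ?_, ?_, fun x hx => (hf x hx.le).unique (ha ▸ ?_)⟩
  · have hk := congrFun ha k
    simp only [a, expDensityCoeff, expCoeff, Pi.smul_apply, smul_eq_mul] at hk
    field_simp at hk
    rw [hk, neg_pow]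
    ring
  · have hexp : -f 0 * x₀ < 0 := Real.exp_lt_one_iff.mp (by linarith)
    nlinarith
  · exact ((hasPowerSeriesOnNonneg_exp _).const_mul (f 0)) x hx.le

/-- Theorem 3 of the paper, analytic form.  Let `F` be an absolutely continuous
distribution function with `F 0 = 0` whose density `f` admits a Maclaurin series
expansion (one-sided derivatives at `0`) valid for all `x > 0`; let `G x = F x * f x`
and `H x = F x ^ 2 * f x`.  If for all `x > 0`
`2 ∫₀ˣ f(4y) (G(x-y) - H(x-y)) dy = f(x) ∫₀ˣ (2 G(y) - 3 H(y)) dy`,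
then `f⁽ᵏ⁾(0) = (-1)^k f(0)^(k+1)` for every `k`; consequently `f(0) > 0` and
`f x = f 0 * exp (-(f 0) x)` for `x > 0`, i.e. `f` is exponential with rate `λ = f 0`. -/
theorem exponential_of_integral_equation_median_fourth
    (F f : ℝ → ℝ)
    (hmono : Monotone F)
    (hF0 : F 0 = 0)
    (htop : Tendsto F atTop (nhds 1))
    (hdens : ∀ x ≥ (0 : ℝ), F x = ∫ t in (0 : ℝ)..x, f t)
    (hsmooth : ContDiffOn ℝ ⊤ f (Set.Ici 0))
    (hanal : ∀ x > (0 : ℝ),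
      HasSum (fun k : ℕ =>
        iteratedDerivWithin k f (Set.Ici 0) 0 * x ^ k / (Nat.factorial k)) (f x))
    (heq : ∀ x > (0 : ℝ),
      2 * ∫ y in (0 : ℝ)..x, f (4 * y) * ((F (x - y) * f (x - y)) - (F (x - y) ^ 2 * f (x - y)))
        = f x * ∫ y in (0 : ℝ)..x, (2 * (F y * f y) - 3 * (F y ^ 2 * f y))) :
    (∀ k : ℕ, iteratedDerivWithin k f (Set.Ici 0) 0 = (-1 : ℝ) ^ k * (f 0) ^ (k + 1))
    ∧ 0 < f 0 ∧ ∀ x > (0 : ℝ), f x = f 0 * Real.exp (-(f 0) * x) :=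
  exponential_of_integral_equation_median_fourth_general F f htop hdens hanal heq
end
end

section
/- For every natural number r ≥ 2, Σ_{j=2}^{r−1} (2^{j−1} − 1)·(C(r,j) − 1) = Σ_{j=2}^{r−1} (3^j − 2^{j+1} + 1), where C(r,j) denotes the binomial coefficient 'r choose j'. -/
open Finset

lemma key_sum (r : ℕ) :
    ∑ i ∈ Finset.range (r + 1), ((2 : ℤ) ^ i - 1) * (r.choose i : ℤ)
      = 3 ^ r - 2 ^ r := by
  have h1 : ((2 : ℤ) + 1) ^ r
      = ∑ i ∈ Finset.range (r + 1), 2 ^ i * 1 ^ (r - i) * (r.choose i : ℤ) :=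
    add_pow 2 1 r
  have h2 : (∑ i ∈ Finset.range (r + 1), ((r.choose i : ℤ))) = 2 ^ r := by
    exact_mod_cast congrArg (Nat.cast : ℕ → ℤ) (Nat.sum_range_choose r)
  have : (3 : ℤ) ^ r = ∑ i ∈ Finset.range (r + 1), 2 ^ i * (r.choose i : ℤ) := by
    rw [show (3:ℤ) = 2 + 1 by norm_num, h1]
    simp [one_pow]
  rw [this, ← h2]
  rw [← Finset.sum_sub_distrib]
  apply Finset.sum_congr rfl
  intro i _
  ring

lemma L_step (r : ℕ) (hr : 2 ≤ r) :
    ∑ j ∈ Finset.Icc 2 r, ((2 : ℤ) ^ (j - 1) - 1) * (((r+1).choose j : ℤ) - 1)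
      = (∑ j ∈ Finset.Icc 2 (r - 1), ((2 : ℤ) ^ (j - 1) - 1) * ((r.choose j : ℤ) - 1))
        + (3 ^ r - 2 ^ (r + 1) + 1) := by
  have pascal : ∀ j ∈ Finset.Icc 2 r,
      ((2 : ℤ) ^ (j - 1) - 1) * (((r+1).choose j : ℤ) - 1)
        = ((2 : ℤ) ^ (j - 1) - 1) * ((r.choose j : ℤ) - 1)
          + ((2 : ℤ) ^ (j - 1) - 1) * (r.choose (j-1) : ℤ) := by
    intro j hj
    simp only [Finset.mem_Icc] at hj
    have hj1 : 1 ≤ j := by omega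
    obtain ⟨k, rfl⟩ : ∃ k, j = k + 1 := ⟨j - 1, by omega⟩
    rw [Nat.choose_succ_succ' r k]
    simp only [Nat.add_sub_cancel]
    push_cast
    ring
  rw [Finset.sum_congr rfl pascal, Finset.sum_add_distrib]
  congr 1
  · -- first sum: Icc 2 r = Icc 2 (r-1) plus top term j = r, which vanishes
    rw [show r = (r-1)+1 by omega, Finset.sum_Icc_succ_top (by omega)]
    rw [show r - 1 + 1 = r by omega]
    simp [Nat.choose_self]
  · -- second sum: reindex j ↦ j - 1
    have hmap : Finset.Icc 2 r = (Finset.Icc 1 (r-1)).map (addRightEmbedding 1) := by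
      rw [Finset.map_add_right_Icc]
      congr 1
      omega
    rw [hmap, Finset.sum_map]
    simp only [addRightEmbedding_apply, Nat.add_sub_cancel]
    -- now ∑ i ∈ Icc 1 (r-1), (2^i - 1) * C(r,i) = 3^r - 2^(r+1) + 1
    have hfull := key_sum r
    have hsplit : Finset.range (r+1) = insert 0 (insert r (Finset.Icc 1 (r-1))) := by
      ext x
      simp [Finset.mem_Icc, Finset.mem_range]
      omega
    rw [hsplit] at hfull
    rw [Finset.sum_insert (by simp [Finset.mem_Icc]; omega)] at hfull
    rw [Finset.sum_insert (by simp [Finset.mem_Icc]; omega)] at hfull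
    simp [Nat.choose_self] at hfull
    have : (2:ℤ)^(r+1) = 2^r * 2 := by ring
    linarith [hfull]

/-- For every natural number `r ≥ 2`,
`∑_{j=2}^{r-1} (2^(j-1) - 1) * (C(r,j) - 1) = ∑_{j=2}^{r-1} (3^j - 2^(j+1) + 1)`. -/
theorem sums_equal (r : ℕ) (hr : 2 ≤ r) :
    ∑ j ∈ Finset.Icc 2 (r - 1), ((2 : ℤ) ^ (j - 1) - 1) * ((r.choose j : ℤ) - 1)
      = ∑ j ∈ Finset.Icc 2 (r - 1), ((3 : ℤ) ^ j - 2 ^ (j + 1) + 1) := by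
  induction r with
  | zero => omega
  | succ n ih =>
    rcases Nat.lt_or_ge n 2 with hn | hn
    · interval_cases n <;> simp
    · have ihn := ih hn
      have hstep := L_step n hn
      rw [Nat.add_sub_cancel, hstep, ihn]
      rw [show n = (n-1)+1 by omega, Finset.sum_Icc_succ_top (by omega),
        show n - 1 + 1 = n by omega]
end

section
/- For every natural number r ≥ 2, the sum Σ_{j=2}^{r−1} (3^j − 2^{j+1} + 1)·(3·C(r,j+1) − 2·4^{r−j−1}) equals 4^r/3 − 3^r + 2^r − 1/3, where C(r,j+1) denotes the binomial coefficient 'r choose j+1'. -/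
/-- For every natural number `r ≥ 2`,
`∑_{j=2}^{r-1} (3^j - 2^(j+1) + 1) * (3*C(r,j+1) - 2*4^(r-j-1)) = 4^r/3 - 3^r + 2^r - 1/3`. -/
theorem sum_identity_four (r : ℕ) (hr : 2 ≤ r) :
    ∑ j ∈ Finset.Icc 2 (r - 1),
        ((3 : ℚ) ^ j - 2 ^ (j + 1) + 1) * (3 * (r.choose (j + 1) : ℚ) - 2 * 4 ^ (r - j - 1))
      = 4 ^ r / 3 - 3 ^ r + 2 ^ r - 1 / 3 := by
  classical
  set c : ℕ → ℚ := fun k => (r.choose (k + 1) : ℚ) with hc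
  set q : ℕ → ℚ := fun k => (4 : ℚ) ^ (r - k - 1) with hq
  set F : ℕ → ℚ := fun j =>
    ((3 : ℚ) ^ j - 2 ^ (j + 1) + 1) * (3 * (r.choose (j + 1) : ℚ) - 2 * 4 ^ (r - j - 1)) with hF
  -- the sum over Icc 2 (r-1) equals the sum over range r (terms j=0,1 vanish)
  have hIcc : Finset.Icc 2 (r - 1) = Finset.Ico 2 r := by
    rw [← Finset.Ico_add_one_right_eq_Icc]
    congr 1
    omega
  have hsplit : ∑ j ∈ Finset.range r, F j =
      ∑ j ∈ Finset.Ico 0 2, F j + ∑ j ∈ Finset.Ico 2 r, F j := by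
    rw [Finset.sum_Ico_consecutive _ (by omega) (by omega), Finset.range_eq_Ico]
  have hlow : ∑ j ∈ Finset.Ico 0 2, F j = 0 := by
    have : Finset.Ico 0 2 = Finset.range 2 := by rfl
    rw [this, Finset.sum_range_succ, Finset.sum_range_one, hF]
    norm_num
  have hmain : (∑ j ∈ Finset.Icc 2 (r - 1), F j) = ∑ j ∈ Finset.range r, F j := by
    rw [hIcc, hsplit, hlow, zero_add]
  rw [show (∑ j ∈ Finset.Icc 2 (r - 1),
        ((3 : ℚ) ^ j - 2 ^ (j + 1) + 1) * (3 * (r.choose (j + 1) : ℚ) - 2 * 4 ^ (r - j - 1)))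
      = ∑ j ∈ Finset.Icc 2 (r - 1), F j from rfl, hmain]
  -- binomial sums: (x+1)^r = x * ∑ x^k * c k + 1
  have hb : ∀ x : ℚ, (x + 1) ^ r = x * (∑ k ∈ Finset.range r, x ^ k * c k) + 1 := by
    intro x
    rw [add_pow]
    rw [Finset.sum_range_succ']
    simp only [one_pow, pow_zero, Nat.choose_zero_right, Nat.cast_one, one_mul, mul_one]
    rw [Finset.mul_sum]
    congr 1
    refine Finset.sum_congr rfl fun k _ => ?_
    rw [hc]
    ring
  -- geometric sums
  have hg : ∀ x : ℚ, (∑ k ∈ Finset.range r, x ^ k * q k) * (x - 4) = x ^ r - 4 ^ r := by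
    intro x
    have := geom_sum₂_mul x (4 : ℚ) r
    rw [← this]
    congr 1
    refine Finset.sum_congr rfl fun k hk => ?_
    rw [hq, Nat.sub_right_comm]
  have hA := hb 3
  have hB := hb 2
  have hC := hb 1
  have hD := hg 3
  have hE := hg 2
  have hFq := hg 1
  -- expand the summand
  have hexp : ∑ j ∈ Finset.range r, F j =
      3 * (∑ k ∈ Finset.range r, (3:ℚ) ^ k * c k)
      - 6 * (∑ k ∈ Finset.range r, (2:ℚ) ^ k * c k)
      + 3 * (1 * (∑ k ∈ Finset.range r, (1:ℚ) ^ k * c k))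
      - 2 * (∑ k ∈ Finset.range r, (3:ℚ) ^ k * q k)
      + 4 * (∑ k ∈ Finset.range r, (2:ℚ) ^ k * q k)
      - 2 * (∑ k ∈ Finset.range r, (1:ℚ) ^ k * q k) := by
    simp only [Finset.mul_sum, ← Finset.sum_add_distrib, ← Finset.sum_sub_distrib]
    refine Finset.sum_congr rfl fun k _ => ?_
    simp only [hF, hc, hq]
    ring
  rw [hexp]
  have h14 : ((1:ℚ) + 1) ^ r = 2 ^ r := by norm_num
  have h24 : ((2:ℚ) + 1) ^ r = 3 ^ r := by norm_num
  have h34 : ((3:ℚ) + 1) ^ r = 4 ^ r := by norm_num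
  rw [h34] at hA; rw [h24] at hB; rw [h14] at hC
  linear_combination -hA + 3 * hB - 3 * hC + 2 * hD - 2 * hE + (2/3) * hFq
end
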